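/- Every Id-learnable countable family of pairwise nonisomorphic structures is co-learnable: if there is a map Γ from structures to Baire space ℕ → ℕ, continuous on LD(K), such that for all R, R' ∈ LD(K), R ≅ R' iff Γ R = Γ R', then there is a learner that co-learns K. -/
import Mathlib


/-- A structure on domain ℕ: a binary relation given as a map to `Bool`. -/
abbrev Struc := ℕ → ℕ → Bool

/-- The restrictions of `R` and `R'` to `{0,…,s} × {0,…,s}` agree. -/
def restrEq (R R' : Struc) (s : ℕ) : Prop :=
  ∀ x ≤ s, ∀ y ≤ s, R x y = R' x y

/-- `R` and `R'` are isomorphic structures. -/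
def Isom (R R' : Struc) : Prop :=
  ∃ e : ℕ ≃ ℕ, ∀ x y, R' (e x) (e y) = R x y

/-- `R↾s` embeds into `R'`: there is a map injective on `{0,…,s}` preserving the relation. -/
def EmbedsRestr (R : Struc) (s : ℕ) (R' : Struc) : Prop :=
  ∃ h : ℕ → ℕ, (∀ x ≤ s, ∀ y ≤ s, h x = h y → x = y) ∧
    (∀ x ≤ s, ∀ y ≤ s, R' (h x) (h y) = R x y)

/-- The learning domain of a family: all isomorphic copies of members of the family. -/
def LD {I : Type} (A : I → Struc) : Set Struc := {R | ∃ i, Isom R (A i)}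

/-- A learner: its conjecture at stage `s` depends only on `R↾s`. -/
def IsLearner {I : Type} (M : Struc → ℕ → Option I) : Prop :=
  ∀ R R' s, restrEq R R' s → M R s = M R' s

/-- `M` Ex-learns the family `A`. -/
def ExLearns {I : Type} (A : I → Struc) (M : Struc → ℕ → Option I) : Prop :=
  ∀ R i, Isom R (A i) → ∃ s₀, ∀ s ≥ s₀, M R s = some i

/-- `M` Fin-learns the family `A`. -/
def FinLearns {I : Type} (A : I → Struc) (M : Struc → ℕ → Option I) : Prop :=
  ∀ R i, Isom R (A i) →
    ∃ s₀, (∀ s < s₀, M R s = none) ∧ (∀ s ≥ s₀, M R s = some i)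

/-- `M` co-learns the family `A`. -/
def CoLearns {I : Type} (A : I → Struc) (M : Struc → ℕ → Option I) : Prop :=
  ∀ R i, Isom R (A i) → ∀ j, (∃ s, M R s = some j) ↔ j ≠ i

/-- `M` nUs-learns the family `A`: it Ex-learns it and never abandons the correct conjecture. -/
def NUsLearns {I : Type} (A : I → Struc) (M : Struc → ℕ → Option I) : Prop :=
  ExLearns A M ∧
    ∀ R i, Isom R (A i) → ∀ s, M R s = some i → ∀ t ≥ s, M R t = some i

/-- `M` Dec-learns the family `A`: it Ex-learns it and never repeats an abandoned conjecture. -/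
def DecLearns {I : Type} (A : I → Struc) (M : Struc → ℕ → Option I) : Prop :=
  ExLearns A M ∧
    ∀ R ∈ LD A, ∀ (j : I) (s : ℕ), M R s = some j → M R (s + 1) ≠ some j →
      ∀ t > s, M R t ≠ some j

/-- `M` PL-learns the family `A`: the unique conjecture output infinitely often is correct. -/
def PLLearns {I : Type} (A : I → Struc) (M : Struc → ℕ → Option I) : Prop :=
  ∀ R ∈ LD A, ∀ i, {s | M R s = some i}.Infinite ↔ Isom R (A i)

/-- The relation `E₀` on Baire space: eventual agreement. -/
def E0 (p q : ℕ → ℕ) : Prop := ∃ m, ∀ n ≥ m, p n = q n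

/-- The relation `E₃` on `ℕ → (ℕ → ℕ)`: columnwise `E₀`. -/
def E3 (p q : ℕ → ℕ → ℕ) : Prop := ∀ m, E0 (p m) (q m)

/-- The relation `E_range` on Baire space: equality of ranges. -/
def Erange (p q : ℕ → ℕ) : Prop := Set.range p = Set.range q


section Aux

open Filter Topology

lemma isom_refl (R : Struc) : Isom R R := ⟨Equiv.refl ℕ, fun _ _ => rfl⟩

lemma isom_symm {R R' : Struc} (h : Isom R R') : Isom R' R := by
  obtain ⟨e, he⟩ := h
  exact ⟨e.symm, fun x y => by
    have := he (e.symm x) (e.symm y)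
    rw [e.apply_symm_apply, e.apply_symm_apply] at this
    exact this.symm⟩

lemma isom_trans {R R' R'' : Struc} (h : Isom R R') (h' : Isom R' R'') : Isom R R'' := by
  obtain ⟨e, he⟩ := h
  obtain ⟨f, hf⟩ := h'
  exact ⟨e.trans f, fun x y => by simp [Equiv.trans_apply, hf, he]⟩

lemma restrEq_refl (R : Struc) (s : ℕ) : restrEq R R s := fun _ _ _ _ => rfl

lemma restrEq_mono {R R' : Struc} {s t : ℕ} (h : restrEq R R' s) (ht : t ≤ s) :
    restrEq R R' t := fun x hx y hy => h x (hx.trans ht) y (hy.trans ht)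

/-- The key semidecidable condition: every structure in the learning domain compatible
with `R↾t` has a `Γ`-value differing from `Γ (A j)` at coordinate `n`. -/
def Dcond {I : Type} (A : I → Struc) (Γ : Struc → (ℕ → ℕ)) (R : Struc) (t : ℕ) (j : I) :
    Prop :=
  ∃ n, ∀ R' ∈ LD A, restrEq R R' t → Γ R' n ≠ Γ (A j) n

lemma dcond_congr {I : Type} (A : I → Struc) (Γ : Struc → (ℕ → ℕ)) {R R' : Struc} {t : ℕ}
    (hRR' : restrEq R R' t) (j : I) :
    Dcond A Γ R t j ↔ Dcond A Γ R' t j := by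
  have key : ∀ R'' , restrEq R R'' t ↔ restrEq R' R'' t := by
    intro R''
    constructor
    · intro hs x hx y hy
      rw [← hRR' x hx y hy]; exact hs x hx y hy
    · intro hs x hx y hy
      rw [hRR' x hx y hy]; exact hs x hx y hy
  unfold Dcond
  constructor
  · rintro ⟨n, hn⟩; exact ⟨n, fun R'' hR'' hr => hn R'' hR'' ((key R'').2 hr)⟩
  · rintro ⟨n, hn⟩; exact ⟨n, fun R'' hR'' hr => hn R'' hR'' ((key R'').1 hr)⟩

/-- Continuity gives finite-use: the value `Γ R n` is determined by some finite
restriction of `R`, among members of the learning domain. -/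
lemma key_continuity {I : Type} (A : I → Struc) (Γ : Struc → (ℕ → ℕ))
    (hcont : ContinuousOn Γ (LD A)) {R : Struc} (hR : R ∈ LD A) (n : ℕ) :
    ∃ s, ∀ R' ∈ LD A, restrEq R R' s → Γ R' n = Γ R n := by
  by_contra hcon
  push_neg at hcon
  choose g hg1 hg2 hg3 using hcon
  have htend : Tendsto g atTop (𝓝 R) := by
    rw [tendsto_pi_nhds]
    intro x
    rw [tendsto_pi_nhds]
    intro y
    have hev : (fun _ : ℕ => R x y) =ᶠ[atTop] fun s => g s x y := by
      rw [Filter.eventuallyEq_iff_exists_mem]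
      refine ⟨Set.Ici (max x y), Filter.Ici_mem_atTop _, fun s hs => ?_⟩
      exact hg2 s x (le_trans (le_max_left x y) hs) y (le_trans (le_max_right x y) hs)
    exact tendsto_const_nhds.congr' hev
  have htendw : Tendsto g atTop (𝓝[LD A] R) :=
    tendsto_nhdsWithin_of_tendsto_nhds_of_eventually_within g htend
      (Filter.Eventually.of_forall hg1)
  have hcomp : Tendsto (fun s => Γ (g s)) atTop (𝓝 (Γ R)) :=
    Filter.Tendsto.comp (hcont R hR) htendw
  have hcoord : Tendsto (fun s => Γ (g s) n) atTop (𝓝 (Γ R n)) :=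
    tendsto_pi_nhds.1 hcomp n
  rw [nhds_discrete, tendsto_pure] at hcoord
  obtain ⟨s, hs⟩ := hcoord.exists
  exact hg3 s hs

end Aux

/-- Every Id-learnable countable family of pairwise nonisomorphic structures is
co-learnable. -/
theorem idLearnable_to_coLearnable {I : Type} [Countable I] (A : I → Struc)
    (hA : ∀ i j, i ≠ j → ¬ Isom (A i) (A j))
    (h : ∃ Γ : Struc → (ℕ → ℕ), ContinuousOn Γ (LD A) ∧
        ∀ R ∈ LD A, ∀ R' ∈ LD A, (Isom R R' ↔ Γ R = Γ R')) :
    ∃ M : Struc → ℕ → Option I, IsLearner M ∧ CoLearns A M := by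
  classical
  obtain ⟨Γ, hcont, hΓ⟩ := h
  obtain ⟨f, hf⟩ := exists_injective_nat I
  refine ⟨fun R s =>
    match Function.partialInv f (Nat.unpair s).1 with
    | none => none
    | some j => if Dcond A Γ R (Nat.unpair s).2 j then some j else none, ?_, ?_⟩
  · -- learner
    intro R R' s hRR'
    have ht : restrEq R R' (Nat.unpair s).2 := restrEq_mono hRR' (Nat.unpair_right_le s)
    cases hc : Function.partialInv f (Nat.unpair s).1 with
    | none => simp [hc]
    | some j =>
      simp only [hc]
      rw [if_congr (dcond_congr A Γ ht j) rfl rfl]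
  · -- co-learns
    intro R i hRi j
    have hRLD : R ∈ LD A := ⟨i, hRi⟩
    have hALD : ∀ k, A k ∈ LD A := fun k => ⟨k, isom_refl _⟩
    have claim1 : ∀ t, ¬ Dcond A Γ R t i := by
      rintro t ⟨n, hn⟩
      exact hn R hRLD (restrEq_refl R t)
        (by rw [(hΓ R hRLD (A i) (hALD i)).1 hRi])
    constructor
    · rintro ⟨s, hs⟩
      intro hji
      subst hji
      revert hs
      cases hc : Function.partialInv f (Nat.unpair s).1 with
      | none => simp [hc]
      | some j' =>
        simp only [hc]
        split_ifs with hd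
        · rintro hsome
          have : j' = j := by injection hsome
          subst this
          exact claim1 _ hd
        · rintro hsome; exact absurd hsome (by simp)
    · intro hji
      have hnIsom : ¬ Isom R (A j) := fun hI => hA i j (fun e => hji (e ▸ rfl))
        (isom_trans (isom_symm hRi) hI)
      have hne : Γ R ≠ Γ (A j) := fun he => hnIsom ((hΓ R hRLD (A j) (hALD j)).2 he)
      obtain ⟨n, hn⟩ : ∃ n, Γ R n ≠ Γ (A j) n := by
        by_contra hcon
        push_neg at hcon
        exact hne (funext hcon)
      obtain ⟨t, htkey⟩ := key_continuity A Γ hcont hRLD n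
      have hD : Dcond A Γ R t j :=
        ⟨n, fun R' hR' hr => by rw [htkey R' hR' hr]; exact hn⟩
      refine ⟨Nat.pair (f j) t, ?_⟩
      simp only [Nat.unpair_pair, Function.partialInv_left hf]
      rw [if_pos hD]
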